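/- arXiv:1206.6188 — 9 statements merged into one kernel-verified Lean document; each statement's English description precedes it below -/
import Mathlib

section
/- For any locally integrable function s : [1, ∞) → ℂ, any real λ > 1 and any t > 1, the logarithmic mean τ(t) := (1/log t) ∫₁ᵗ s(u)/u du satisfies the representation s(t) − τ(t) = (λ/(λ−1))(τ(t^λ) − τ(t)) − (1/((λ−1) log t)) ∫ₜ^{t^λ} (s(u) − s(t))/u du. -/
open MeasureTheory Set

/-! With `A = ∫₁ᵗ s(u)/u du` and `B = ∫ₜ^{t^λ} s(u)/u du` we have `τ(t) = A / log t` and, since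
`log (t^λ) = λ log t`, `τ(t^λ) = (A + B) / (λ log t)`; moreover `∫ₜ^{t^λ} du/u = (λ - 1) log t`
turns the last integral into `B - (λ - 1) s(t) log t`. The identity is then linear in `A`, `B`
and `s(t)`. -/

lemma integrableOn_div_ofReal {s : ℝ → ℂ} {a b : ℝ} (ha : 0 < a)
    (hs : IntegrableOn s (Icc a b)) : IntegrableOn (fun u => s u / (u : ℂ)) (Icc a b) := by
  have hinv : ContinuousOn (fun u : ℝ => ((u : ℂ))⁻¹) (Icc a b) :=
    Complex.continuous_ofReal.continuousOn.inv₀ fun u hu =>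
      Complex.ofReal_ne_zero.mpr (ha.trans_le hu.1).ne'
  simpa only [div_eq_mul_inv] using hs.mul_continuousOn hinv isCompact_Icc

lemma setIntegral_Ioc_inv_ofReal {a b : ℝ} (ha : 0 < a) (hab : a ≤ b) :
    ∫ u in Ioc a b, ((u : ℂ))⁻¹ = ((Real.log b - Real.log a : ℝ) : ℂ) := by
  rw [← Real.log_div (ha.trans_le hab).ne' ha.ne', ← integral_inv_of_pos ha (ha.trans_le hab),
    intervalIntegral.integral_of_le hab]
  simpa using integral_ofReal (𝕜 := ℂ) (f := fun u : ℝ => u⁻¹) (μ := volume.restrict (Ioc a b))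

lemma setIntegral_Ioc_sub_const_div {s : ℝ → ℂ} {a b : ℝ} (c : ℂ) (ha : 0 < a) (hab : a ≤ b)
    (hs : IntegrableOn s (Icc a b)) :
    ∫ u in Ioc a b, (s u - c) / (u : ℂ)
      = (∫ u in Ioc a b, s u / (u : ℂ)) - c * ((Real.log b - Real.log a : ℝ) : ℂ) := by
  have hc : IntegrableOn (fun u : ℝ => c / (u : ℂ)) (Ioc a b) :=
    (integrableOn_div_ofReal ha (integrableOn_const measure_Icc_lt_top.ne)).mono_set
      Ioc_subset_Icc_self
  simp_rw [sub_div]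
  rw [integral_sub ((integrableOn_div_ofReal ha hs).mono_set Ioc_subset_Icc_self) hc]
  simp_rw [div_eq_mul_inv c]
  rw [integral_const_mul, setIntegral_Ioc_inv_ofReal ha hab]

lemma setIntegral_Ioc_add_Ioc {f : ℝ → ℂ} {a b c : ℝ} (hab : a ≤ b) (hbc : b ≤ c)
    (hf : IntegrableOn f (Ioc a c)) :
    ∫ u in Ioc a c, f u = (∫ u in Ioc a b, f u) + ∫ u in Ioc b c, f u := by
  rw [← Ioc_union_Ioc_eq_Ioc hab hbc,
    setIntegral_union (Ioc_disjoint_Ioc_of_le le_rfl) measurableSet_Ioc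
      (hf.mono_set (Ioc_subset_Ioc le_rfl hbc)) (hf.mono_set (Ioc_subset_Ioc hab le_rfl))]

theorem lemma1_part_i
    (s : ℝ → ℂ) (hs : ∀ t : ℝ, IntegrableOn s (Icc 1 t))
    (τ : ℝ → ℂ)
    (hτ : ∀ t : ℝ, τ t = ((Real.log t : ℂ))⁻¹ * ∫ u in Ioc (1:ℝ) t, s u / (u : ℂ))
    (l t : ℝ) (hl : 1 < l) (ht : 1 < t) :
    s t - τ t = ((l / (l - 1) : ℝ) : ℂ) * (τ (t ^ l) - τ t)
      - (((l - 1) * Real.log t : ℝ) : ℂ)⁻¹ *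
        ∫ u in Ioc t (t ^ l), (s u - s t) / (u : ℂ) := by
  have ht₀ : 0 < t := by linarith
  have htl : t < t ^ l := by simpa using Real.rpow_lt_rpow_of_exponent_lt ht hl
  have hlog : Real.log (t ^ l) = l * Real.log t := Real.log_rpow ht₀ l
  have hL : (Real.log t : ℂ) ≠ 0 := Complex.ofReal_ne_zero.mpr (Real.log_pos ht).ne'
  have hl₀ : (l : ℂ) ≠ 0 := Complex.ofReal_ne_zero.mpr (by linarith)
  have hl₁ : (l : ℂ) - 1 ≠ 0 := by exact_mod_cast (by linarith : l - 1 ≠ 0)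
  rw [hτ, hτ, setIntegral_Ioc_add_Ioc ht.le htl.le
      ((integrableOn_div_ofReal zero_lt_one (hs _)).mono_set Ioc_subset_Icc_self),
    setIntegral_Ioc_sub_const_div _ ht₀ htl.le ((hs _).mono_set (Icc_subset_Icc_left ht.le)), hlog]
  push_cast
  field_simp
  ring
end

section
/- For any locally integrable function s : [1, ∞) → ℂ, any real λ with 0 < λ < 1 and any t > 1, the logarithmic mean τ satisfies s(t) − τ(t) = (λ/(1−λ))(τ(t) − τ(t^λ)) + (1/((1−λ) log t)) ∫_{t^λ}^{t} (s(t) − s(u))/u du. -/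
open Filter MeasureTheory Set

/-
With `F x = ∫₁ˣ s(u)/u du` and `a = t^λ`, we have `τ t = F t / log t`, `τ a = F a / (λ log t)`,
and `∫ₐᵗ (s t - s u)/u du = (1 - λ) log t · s t - (F t - F a)` because `∫ₐᵗ du/u = (1 - λ) log t`.
Substituting these three facts, the identity is a rearrangement of fractions.
-/

lemma MeasureTheory.IntegrableOn.div_ofReal_Icc {f : ℝ → ℂ} {a b : ℝ} (ha : 0 < a)
    (hf : IntegrableOn f (Icc a b)) : IntegrableOn (fun u => f u / (u : ℂ)) (Icc a b) := by
  have hinv : ContinuousOn (fun u : ℝ => (u : ℂ)⁻¹) (Icc a b) :=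
    (Complex.continuous_ofReal.continuousOn).inv₀ fun x hx =>
      Complex.ofReal_ne_zero.2 (ha.trans_le hx.1).ne'
  simpa only [div_eq_mul_inv] using hf.mul_continuousOn hinv isCompact_Icc

lemma setIntegral_Ioc_ofReal_inv {a b : ℝ} (ha : 0 < a) (hab : a ≤ b) :
    ∫ u in Ioc a b, (u : ℂ)⁻¹ = (Real.log (b / a) : ℂ) := by
  have hb : 0 < b := ha.trans_le hab
  simp_rw [← Complex.ofReal_inv]
  rw [integral_complex_ofReal, ← intervalIntegral.integral_of_le hab, integral_inv_of_pos ha hb]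

lemma setIntegral_Ioc_const_sub_div {f : ℝ → ℂ} {a b : ℝ} (c : ℂ) (ha : 0 < a) (hab : a ≤ b)
    (hf : IntegrableOn (fun u => f u / (u : ℂ)) (Ioc a b)) :
    ∫ u in Ioc a b, (c - f u) / (u : ℂ) =
      c * (Real.log (b / a) : ℂ) - ∫ u in Ioc a b, f u / (u : ℂ) := by
  have hconst : IntegrableOn (fun u : ℝ => c * (u : ℂ)⁻¹) (Ioc a b) :=
    ((IntegrableOn.div_ofReal_Icc ha (integrableOn_const (by simp))).mono_set
      Ioc_subset_Icc_self).congr_fun (fun u _ => by simp [div_eq_mul_inv]) measurableSet_Ioc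
  simp_rw [sub_div, div_eq_mul_inv c]
  rw [integral_sub hconst hf, integral_const_mul, setIntegral_Ioc_ofReal_inv ha hab]

theorem lemma1_part_ii
    (s : ℝ → ℂ) (hs : ∀ t : ℝ, IntegrableOn s (Icc 1 t))
    (τ : ℝ → ℂ)
    (hτ : ∀ t : ℝ, τ t = ((Real.log t : ℂ))⁻¹ * ∫ u in Ioc (1:ℝ) t, s u / (u : ℂ))
    (l t : ℝ) (hl0 : 0 < l) (hl1 : l < 1) (ht : 1 < t) :
    s t - τ t = ((l / (1 - l) : ℝ) : ℂ) * (τ t - τ (t ^ l))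
      + (((1 - l) * Real.log t : ℝ) : ℂ)⁻¹ *
        ∫ u in Ioc (t ^ l) t, (s t - s u) / (u : ℂ) := by
  have ht0 : 0 < t := zero_lt_one.trans ht
  have ha1 : 1 < t ^ l := Real.one_lt_rpow ht hl0
  have hat : t ^ l < t := by simpa using Real.rpow_lt_rpow_of_exponent_lt ht hl1
  have hlog : Real.log t ≠ 0 := (Real.log_pos ht).ne'
  have hloga : Real.log (t ^ l) = l * Real.log t := Real.log_rpow ht0 l
  have hlog_div : Real.log (t / t ^ l) = (1 - l) * Real.log t := by
    rw [Real.log_div ht0.ne' (zero_lt_one.trans ha1).ne', hloga]; ring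
  have hI := (hs t).div_ofReal_Icc zero_lt_one
  have hsplit : ∫ u in Ioc 1 t, s u / (u : ℂ) =
      (∫ u in Ioc 1 (t ^ l), s u / (u : ℂ)) + ∫ u in Ioc (t ^ l) t, s u / (u : ℂ) := by
    rw [← setIntegral_union (Ioc_disjoint_Ioc_of_le le_rfl) measurableSet_Ioc
      (hI.mono_set fun x hx => ⟨hx.1.le, hx.2.trans hat.le⟩)
      (hI.mono_set fun x hx => ⟨(ha1.trans hx.1).le, hx.2⟩),
      Ioc_union_Ioc_eq_Ioc ha1.le hat.le]
  rw [setIntegral_Ioc_const_sub_div _ (zero_lt_one.trans ha1) hat.le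
      (hI.mono_set fun x hx => ⟨(ha1.trans hx.1).le, hx.2⟩),
    hτ t, hτ (t ^ l), hsplit, hloga, hlog_div]
  have hl : (l : ℂ) ≠ 0 := Complex.ofReal_ne_zero.2 hl0.ne'
  have h1l : (1 - l : ℂ) ≠ 0 := by exact_mod_cast (sub_pos.2 hl1).ne'
  have hL : (Real.log t : ℂ) ≠ 0 := Complex.ofReal_ne_zero.2 hlog
  push_cast
  field_simp
  ring
end

section
/- Let s : [1, ∞) → ℝ be locally integrable and slowly decreasing with respect to (L,1) summability: for every ε > 0 there exist t₀ > 1 and λ > 1 such that s(u) − s(t) ≥ −ε whenever t₀ ≤ t < u ≤ t^λ. If τ(t) := (1/log t) ∫₁ᵗ s(u)/u du → A as t → ∞, then s(t) → A as t → ∞. -/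
/-!
Put `τ(x) = (log x)⁻¹ ∫₁ˣ s(u)/u du`. For `x > 1` and `λ > 1`,
`∫ₓ^{x^λ} s(u)/u du = (λ τ(x^λ) - τ(x)) log x`, while on `(x, x^λ)` slow decrease gives
`s(x) - ε ≤ s(u) ≤ s(x^λ) + ε` and `∫ₓ^{x^λ} du/u = (λ - 1) log x`. Hence
`s(x) - ε ≤ (λ τ(x^λ) - τ(x)) / (λ - 1) ≤ s(x^λ) + ε`, and the middle term tends to `A`.
-/

open Filter MeasureTheory Set Topology Real

noncomputable def logMean (s : ℝ → ℝ) (x : ℝ) : ℝ :=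
  (log x)⁻¹ * ∫ u in Ioc (1 : ℝ) x, s u / u

section

variable {s : ℝ → ℝ} {a b c x : ℝ}

lemma intervalIntegrable_div_self (hs : IntegrableOn s (Icc a b)) (ha : 0 < a) (hab : a ≤ b) :
    IntervalIntegrable (fun u => s u / u) volume a b := by
  rw [intervalIntegrable_iff_integrableOn_Icc_of_le hab]
  simp only [div_eq_mul_inv]
  exact hs.mul_continuousOn (continuousOn_inv₀.mono fun u hu => (ha.trans_le hu.1).ne')
    isCompact_Icc

lemma integral_const_div_self (ha : 0 < a) (hb : 0 < b) :
    ∫ u in a..b, c / u = c * (log b - log a) := by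
  simp only [div_eq_mul_inv, intervalIntegral.integral_const_mul, integral_inv_of_pos ha hb]
  rw [← div_eq_mul_inv, log_div hb.ne' ha.ne']

lemma intervalIntegrable_const_div_self (ha : 0 < a) (hab : a ≤ b) :
    IntervalIntegrable (fun u => c / u) volume a b :=
  intervalIntegrable_div_self (integrableOn_const isCompact_Icc.measure_lt_top.ne) ha hab

lemma mul_log_sub_le_integral_div_self (hf : IntervalIntegrable (fun u => s u / u) volume a b)
    (ha : 0 < a) (hab : a ≤ b) (hc : ∀ u ∈ Ioo a b, c ≤ s u) :
    c * (log b - log a) ≤ ∫ u in a..b, s u / u := by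
  rw [← integral_const_div_self ha (ha.trans_le hab)]
  refine intervalIntegral.integral_mono_on_of_le_Ioo hab
    (intervalIntegrable_const_div_self ha hab) hf fun u hu => ?_
  exact div_le_div_of_nonneg_right (hc u hu) (ha.trans hu.1).le

lemma integral_div_self_le_mul_log_sub (hf : IntervalIntegrable (fun u => s u / u) volume a b)
    (ha : 0 < a) (hab : a ≤ b) (hc : ∀ u ∈ Ioo a b, s u ≤ c) :
    ∫ u in a..b, s u / u ≤ c * (log b - log a) := by
  rw [← integral_const_div_self ha (ha.trans_le hab)]
  refine intervalIntegral.integral_mono_on_of_le_Ioo hab hf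
    (intervalIntegrable_const_div_self ha hab) fun u hu => ?_
  exact div_le_div_of_nonneg_right (hc u hu) (ha.trans hu.1).le

lemma integral_one_div_self_eq_log_mul_logMean (hx : 1 < x) :
    ∫ u in (1 : ℝ)..x, s u / u = log x * logMean s x := by
  rw [logMean, mul_inv_cancel_left₀ (log_pos hx).ne', intervalIntegral.integral_of_le hx.le]

end

section

variable {s : ℝ → ℝ} {ε t₀ l x : ℝ}

lemma integral_div_self_rpow (hs : IntegrableOn s (Icc 1 (x ^ l))) (hx : 1 < x) (hl : 1 ≤ l) :
    ∫ u in x..x ^ l, s u / u = (l * logMean s (x ^ l) - logMean s x) * log x := by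
  have hxl : x ≤ x ^ l := self_le_rpow_of_one_le hx.le hl
  rw [← intervalIntegral.integral_interval_sub_left
      (intervalIntegrable_div_self hs one_pos (hx.le.trans hxl))
      (intervalIntegrable_div_self (hs.mono_set (Icc_subset_Icc_right hxl)) one_pos hx.le),
    integral_one_div_self_eq_log_mul_logMean (hx.trans_le hxl),
    integral_one_div_self_eq_log_mul_logMean hx, log_rpow (one_pos.trans hx)]
  ring

variable (hs : IntegrableOn s (Icc 1 (x ^ l))) (hl : 1 < l)
  (hslow : ∀ t u : ℝ, t₀ ≤ t → t < u → u ≤ t ^ l → s u - s t ≥ -ε) (hx₀ : t₀ ≤ x) (hx : 1 < x)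
include hs hl hslow hx₀ hx

lemma sub_mul_le_logMean_increment :
    (s x - ε) * (l - 1) ≤ l * logMean s (x ^ l) - logMean s x := by
  have hxl : x ≤ x ^ l := self_le_rpow_of_one_le hx.le hl.le
  have h := mul_log_sub_le_integral_div_self (c := s x - ε)
    (intervalIntegrable_div_self (hs.mono_set (Icc_subset_Icc_left hx.le)) (one_pos.trans hx) hxl)
    (one_pos.trans hx) hxl fun u hu => by linarith [hslow x u hx₀ hu.1 hu.2.le]
  rw [integral_div_self_rpow hs hx hl.le, log_rpow (one_pos.trans hx)] at h
  exact le_of_mul_le_mul_right (by linarith) (log_pos hx)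

lemma logMean_increment_le_add_mul :
    l * logMean s (x ^ l) - logMean s x ≤ (s (x ^ l) + ε) * (l - 1) := by
  have hxl : x ≤ x ^ l := self_le_rpow_of_one_le hx.le hl.le
  have h := integral_div_self_le_mul_log_sub (c := s (x ^ l) + ε)
    (intervalIntegrable_div_self (hs.mono_set (Icc_subset_Icc_left hx.le)) (one_pos.trans hx) hxl)
    (one_pos.trans hx) hxl fun u hu => by
      linarith [hslow u (x ^ l) (hx₀.trans hu.1.le) hu.2
        (rpow_le_rpow (one_pos.trans hx).le hu.1.le (one_pos.trans hl).le)]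
  rw [integral_div_self_rpow hs hx hl.le, log_rpow (one_pos.trans hx)] at h
  exact le_of_mul_le_mul_right (by linarith) (log_pos hx)

end

section

variable {s : ℝ → ℝ} {A ε t₀ l : ℝ}

lemma tendsto_logMean_increment (hA : Tendsto (logMean s) atTop (𝓝 A)) (hl : 0 < l) :
    Tendsto (fun x => l * logMean s (x ^ l) - logMean s x) atTop (𝓝 ((l - 1) * A)) := by
  rw [sub_one_mul]
  exact ((hA.comp (tendsto_rpow_atTop hl)).const_mul l).sub hA

variable (hs : ∀ t, IntegrableOn s (Icc 1 t)) (hA : Tendsto (logMean s) atTop (𝓝 A))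
  (hl : 1 < l) (hslow : ∀ t u : ℝ, t₀ ≤ t → t < u → u ≤ t ^ l → s u - s t ≥ -ε) (hε : 0 < ε)
include hs hA hl hslow hε

lemma eventually_lt_add_two_mul : ∀ᶠ x in atTop, s x < A + 2 * ε := by
  have hl1 : 0 < l - 1 := sub_pos.2 hl
  filter_upwards [(tendsto_logMean_increment hA (one_pos.trans hl)).eventually
      (gt_mem_nhds (mul_lt_mul_of_pos_left (lt_add_of_pos_right A hε) hl1)),
    eventually_ge_atTop t₀, eventually_gt_atTop 1] with x hD hx₀ hx
  have h := (sub_mul_le_logMean_increment (hs _) hl hslow hx₀ hx).trans_lt hD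
  rw [mul_comm (l - 1)] at h
  linarith [lt_of_mul_lt_mul_right h hl1.le]

lemma eventually_sub_two_mul_lt : ∀ᶠ t in atTop, A - 2 * ε < s t := by
  have hl1 : 0 < l - 1 := sub_pos.2 hl
  have hpow : ∀ᶠ x in atTop, A - 2 * ε < s (x ^ l) := by
    filter_upwards [(tendsto_logMean_increment hA (one_pos.trans hl)).eventually
        (lt_mem_nhds (mul_lt_mul_of_pos_left (sub_lt_self A hε) hl1)),
      eventually_ge_atTop t₀, eventually_gt_atTop 1] with x hD hx₀ hx
    have h := hD.trans_le (logMean_increment_le_add_mul (hs _) hl hslow hx₀ hx)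
    rw [mul_comm (l - 1)] at h
    linarith [lt_of_mul_lt_mul_right h hl1.le]
  filter_upwards [(tendsto_rpow_atTop (inv_pos.2 (one_pos.trans hl))).eventually hpow,
    eventually_ge_atTop 0] with t ht ht0
  rwa [rpow_inv_rpow ht0 (one_pos.trans hl).ne'] at ht

end

theorem corollary1
    (s : ℝ → ℝ) (hs : ∀ t : ℝ, IntegrableOn s (Icc 1 t)) (A : ℝ)
    (hsd : ∀ ε > (0:ℝ), ∃ t₀ > (1:ℝ), ∃ l > (1:ℝ),
      ∀ t u : ℝ, t₀ ≤ t → t < u → u ≤ t ^ l → s u - s t ≥ -ε)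
    (hL1 : Tendsto (fun t : ℝ => (Real.log t)⁻¹ * ∫ u in Ioc (1:ℝ) t, s u / u)
      atTop (nhds A)) :
    Tendsto s atTop (nhds A) := by
  refine tendsto_order.2 ⟨fun a ha => ?_, fun a ha => ?_⟩
  · obtain ⟨t₀, -, l, hl, hslow⟩ := hsd ((A - a) / 2) (by linarith)
    filter_upwards [eventually_sub_two_mul_lt hs hL1 hl hslow (by linarith)] with t ht
    linarith
  · obtain ⟨t₀, -, l, hl, hslow⟩ := hsd ((a - A) / 2) (by linarith)
    filter_upwards [eventually_lt_add_two_mul hs hL1 hl hslow (by linarith)] with t ht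
    linarith
end

section
/- Let f : [1, ∞) → ℝ be locally integrable and suppose there exist constants C > 0 and x₀ ≥ 1 such that x (log x) f(x) ≥ −C for almost every x > x₀. Then the function s(u) := ∫₁ᵘ f(x) dx is slowly decreasing with respect to (L,1) summability: for every ε > 0 there exist t₀ > 1 and λ > 1 such that s(u) − s(t) ≥ −ε whenever t₀ ≤ t < u ≤ t^λ. -/
open Filter MeasureTheory Set

theorem one_sided_tauberian_condition
    (f : ℝ → ℝ) (hf : ∀ t : ℝ, IntegrableOn f (Icc 1 t))
    (C x₀ : ℝ) (hC : 0 < C) (hx₀ : 1 ≤ x₀)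
    (hcond : ∀ᵐ x : ℝ, x₀ < x → -C ≤ x * Real.log x * f x)
    (s : ℝ → ℝ) (hsdef : ∀ u : ℝ, s u = ∫ x in (1:ℝ)..u, f x) :
    ∀ ε > (0:ℝ), ∃ t₀ > (1:ℝ), ∃ l > (1:ℝ),
      ∀ t u : ℝ, t₀ ≤ t → t < u → u ≤ t ^ l → s u - s t ≥ -ε := by
  intro ε hε
  refine ⟨x₀ + 1, by linarith, Real.exp (ε / C),
    Real.one_lt_exp_iff.mpr (div_pos hε hC) , ?_⟩
  intro t u ht htu hul
  have ht1 : (1:ℝ) < t := by linarith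
  have hu1 : (1:ℝ) < u := lt_trans ht1 htu
  have htpos : (0:ℝ) < t := by linarith
  have hupos : (0:ℝ) < u := by linarith
  have hlogt : 0 < Real.log t := Real.log_pos ht1
  have hlogu : 0 < Real.log u := Real.log_pos hu1
  set l := Real.exp (ε / C) with hl
  have hlpos : 0 < l := Real.exp_pos _
  -- interval integrability of f
  have hItu : IntervalIntegrable f MeasureTheory.volume t u := by
    apply IntegrableOn.intervalIntegrable
    apply (hf u).mono_set
    rw [uIcc_of_le htu.le]
    exact Icc_subset_Icc (by linarith) le_rfl
  have hI1t : IntervalIntegrable f MeasureTheory.volume 1 t := by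
    apply IntegrableOn.intervalIntegrable
    rw [uIcc_of_le ht1.le]; exact hf t
  have hI1u : IntervalIntegrable f MeasureTheory.volume 1 u := by
    apply IntegrableOn.intervalIntegrable
    rw [uIcc_of_le hu1.le]; exact hf u
  have hsplit : s u - s t = ∫ x in t..u, f x := by
    rw [hsdef, hsdef, ← intervalIntegral.integral_add_adjacent_intervals hI1t hItu]
    ring
  -- the comparison function
  set g : ℝ → ℝ := fun x => (Real.log x)⁻¹ * x⁻¹ with hg
  have hgcont : ContinuousOn g (Icc t u) := by
    apply ContinuousOn.mul
    · apply ContinuousOn.inv₀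
      · exact (Real.continuousOn_log.mono (fun x hx => by
          simp only [mem_compl_iff, mem_singleton_iff]
          rintro rfl
          exact absurd hx.1 (by norm_num; linarith)))
      · intro x hx
        exact ne_of_gt (Real.log_pos (by linarith [hx.1]))
    · apply ContinuousOn.inv₀ continuousOn_id
      intro x hx
      exact ne_of_gt (show (0:ℝ) < id x from by simpa using lt_of_lt_of_le htpos hx.1)
  have hgint : IntervalIntegrable g MeasureTheory.volume t u := by
    apply ContinuousOn.intervalIntegrable
    rwa [uIcc_of_le htu.le]
  have hgCint : IntervalIntegrable (fun x => -C * g x) MeasureTheory.volume t u :=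
    hgint.const_mul _
  -- pointwise a.e. bound
  have hae : ∀ᵐ x ∂(MeasureTheory.volume.restrict (Icc t u)), -C * g x ≤ f x := by
    have h1 : ∀ᵐ x ∂(MeasureTheory.volume.restrict (Icc t u)),
        x₀ < x → -C ≤ x * Real.log x * f x :=
      MeasureTheory.ae_restrict_of_ae hcond
    have h2 : ∀ᵐ x ∂(MeasureTheory.volume.restrict (Icc t u)), x ∈ Icc t u :=
      MeasureTheory.ae_restrict_mem measurableSet_Icc
    filter_upwards [h1, h2] with x hx1 hx2
    have hxt : t ≤ x := hx2.1
    have hx0 : x₀ < x := by linarith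
    have hx1' : 1 < x := by linarith
    have hxpos : 0 < x := by linarith
    have hlx : 0 < Real.log x := Real.log_pos hx1'
    have hmul : 0 < x * Real.log x := mul_pos hxpos hlx
    have hb := hx1 hx0
    have : -C / (x * Real.log x) ≤ f x := by
      rw [div_le_iff₀ hmul]
      linarith [hb, mul_comm (f x) (x * Real.log x)]
    calc -C * g x = -C / (x * Real.log x) := by
          simp only [hg, div_eq_mul_inv, mul_inv]; ring
      _ ≤ f x := this
  have hmono : ∫ x in t..u, -C * g x ≤ ∫ x in t..u, f x :=
    intervalIntegral.integral_mono_ae_restrict htu.le hgCint hItu hae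
  -- compute the comparison integral via FTC
  have hftc : ∫ x in t..u, g x = Real.log (Real.log u) - Real.log (Real.log t) := by
    apply intervalIntegral.integral_eq_sub_of_hasDerivAt
    · intro x hx
      rw [uIcc_of_le htu.le] at hx
      have hx1' : 1 < x := by linarith [hx.1]
      have hxpos : 0 < x := by linarith
      have hlx : 0 < Real.log x := Real.log_pos hx1'
      have h := (Real.hasDerivAt_log (ne_of_gt hlx)).comp x
        (Real.hasDerivAt_log (ne_of_gt hxpos))
      exact h
    · apply ContinuousOn.intervalIntegrable
      rwa [uIcc_of_le htu.le]
  -- bound the comparison integral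
  have hloglog : Real.log (Real.log u) - Real.log (Real.log t) ≤ ε / C := by
    have hlogle : Real.log u ≤ l * Real.log t := by
      calc Real.log u ≤ Real.log (t ^ l) := Real.log_le_log hupos hul
        _ = l * Real.log t := Real.log_rpow htpos l
    have : Real.log (Real.log u) ≤ Real.log (l * Real.log t) :=
      Real.log_le_log hlogu hlogle
    rw [Real.log_mul (ne_of_gt hlpos) (ne_of_gt hlogt), hl, Real.log_exp] at this
    linarith
  have hfinal : -ε ≤ ∫ x in t..u, -C * g x := by
    rw [intervalIntegral.integral_const_mul, hftc]
    have h1 : C * (Real.log (Real.log u) - Real.log (Real.log t)) ≤ C * (ε / C) :=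
      mul_le_mul_of_nonneg_left hloglog hC.le
    rw [mul_div_cancel₀ _ (ne_of_gt hC)] at h1
    nlinarith
  rw [hsplit]
  linarith
end

section
/- Let f : [1, ∞) → ℂ be locally integrable and suppose there exist constants C > 0 and x₀ ≥ 1 such that x (log x) |f(x)| ≤ C for almost every x > x₀. Then s(u) := ∫₁ᵘ f(x) dx is slowly oscillating with respect to (L,1) summability: for every ε > 0 there exist t₀ > 1 and λ > 1 such that |s(u) − s(t)| ≤ ε whenever t₀ ≤ t < u ≤ t^λ. -/
open MeasureTheory Set Real

/-! Since `(log ∘ log)' = 1 / (x log x)`, the bound on `f` gives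
`‖s u - s t‖ ≤ C (log log u - log log t)`, and `u ≤ t ^ l` makes this at most `C log l`;
take `l = exp (ε / C)`. -/

theorem norm_integral_le_mul_log_log_sub {E : Type*} [NormedAddCommGroup E] [NormedSpace ℝ E]
    {f : ℝ → E} {a b C : ℝ} (ha : 1 < a) (hab : a ≤ b)
    (hf : ∀ᵐ x, x ∈ Ioc a b → x * log x * ‖f x‖ ≤ C) :
    ‖∫ x in a..b, f x‖ ≤ C * (log (log b) - log (log a)) := by
  have hg : IntervalIntegrable (fun x ↦ C * (x⁻¹ / log x)) volume a b :=
    ContinuousOn.intervalIntegrable <| by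
      fun_prop (disch := grind [log_pos, uIcc])
  calc ‖∫ x in a..b, f x‖ ≤ ∫ x in a..b, C * (x⁻¹ / log x) := by
        refine intervalIntegral.norm_integral_le_of_norm_le hab (hf.mono fun x hx hmem ↦ ?_) hg
        have hxlog : 0 < x * log x :=
          mul_pos (by linarith [hmem.1]) (log_pos (by linarith [hmem.1]))
        rw [show C * (x⁻¹ / log x) = C / (x * log x) by ring, le_div_iff₀ hxlog, mul_comm]
        exact hx hmem
    _ = C * (log (log b) - log (log a)) := by
        rw [intervalIntegral.integral_const_mul, integral_inv_div_log ha (ha.trans_le hab)]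

theorem log_log_le_of_le_rpow {t u l : ℝ} (ht : 1 < t) (hu : 1 < u) (hl : 0 < l)
    (hut : u ≤ t ^ l) : log (log u) ≤ log (log t) + log l := by
  have hlogu : log u ≤ l * log t := by
    simpa [log_rpow (by linarith : 0 < t)] using log_le_log (by linarith) hut
  calc log (log u) ≤ log (l * log t) := log_le_log (log_pos hu) hlogu
    _ = log (log t) + log l := by
        rw [log_mul hl.ne' (log_pos ht).ne', add_comm]

theorem two_sided_tauberian_condition
    (f : ℝ → ℂ) (hf : ∀ t : ℝ, IntegrableOn f (Icc 1 t))
    (C x₀ : ℝ) (hC : 0 < C) (hx₀ : 1 ≤ x₀)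
    (hcond : ∀ᵐ x : ℝ, x₀ < x → x * Real.log x * ‖f x‖ ≤ C)
    (s : ℝ → ℂ) (hsdef : ∀ u : ℝ, s u = ∫ x in (1:ℝ)..u, f x) :
    ∀ ε > (0:ℝ), ∃ t₀ > (1:ℝ), ∃ l > (1:ℝ),
      ∀ t u : ℝ, t₀ ≤ t → t < u → u ≤ t ^ l → ‖s u - s t‖ ≤ ε := by
  intro ε hε
  refine ⟨x₀ + 1, by linarith, exp (ε / C), one_lt_exp_iff.mpr (div_pos hε hC), ?_⟩
  intro t u ht htu hut
  have h1t : 1 < t := by linarith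
  have hf' (v : ℝ) (hv : 1 ≤ v) : IntervalIntegrable f volume 1 v :=
    (intervalIntegrable_iff_integrableOn_Icc_of_le hv).2 (hf v)
  have hbound : ∀ᵐ x, x ∈ Ioc t u → x * log x * ‖f x‖ ≤ C :=
    hcond.mono fun x hx hmem ↦ hx (by linarith [hmem.1])
  have hloglog := log_log_le_of_le_rpow h1t (h1t.trans htu) (exp_pos _) hut
  rw [log_exp] at hloglog
  calc ‖s u - s t‖ = ‖∫ x in t..u, f x‖ := by
        rw [hsdef, hsdef, intervalIntegral.integral_interval_sub_left
          (hf' u (by linarith)) (hf' t h1t.le)]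
    _ ≤ C * (log (log u) - log (log t)) := norm_integral_le_mul_log_log_sub h1t htu.le hbound
    _ ≤ C * (ε / C) := by gcongr; linarith
    _ = ε := mul_div_cancel₀ _ hC.ne'
end

section
/- There exists a locally integrable function s : [1, ∞) → ℝ that is summable (L,1) to 0, i.e. (1/log t) ∫₁ᵗ s(u)/u du → 0 as t → ∞, but is not Cesàro summable (C,1) to any finite limit, i.e. (1/t) ∫₁ᵗ s(u) du does not converge as t → ∞. (For example, s(t) := m·e^{2^m} for t ∈ [e^{2^m}, e^{2^m}+1], m ≥ 1, and s(t) := 0 otherwise.) -/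
open Filter MeasureTheory Set Real Topology

/-! Take `s u = cos (log u)`. Its logarithmic mean is `sin (log t) / log t → 0`, while its Cesàro
mean is `(cos (log t) + sin (log t)) / 2 - 1 / (2 t)`: up to `o(1)` a nonconstant `2π`-periodic
function of `log t`, which has no limit. -/

lemma Function.Periodic.eq_of_tendsto_atTop {α : Type*} [TopologicalSpace α] [T2Space α]
    {f : ℝ → α} {c : ℝ} (hf : Function.Periodic f c) (hc : 0 < c) {A : α}
    (hA : Tendsto f atTop (𝓝 A)) (x : ℝ) : f x = A := by
  have hseq : Tendsto (fun n : ℕ => x + n * c) atTop atTop :=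
    tendsto_atTop_add_const_left _ _ (tendsto_natCast_atTop_atTop.atTop_mul_const hc)
  refine tendsto_nhds_unique tendsto_const_nhds ((hA.comp hseq).congr fun n => ?_)
  exact (hf.nat_mul n) x

lemma integrableOn_cos_log {s : Set ℝ} (hs : volume s ≠ ⊤) :
    IntegrableOn (fun u => cos (log u)) s :=
  Measure.integrableOn_of_bounded (M := 1) hs
    (continuous_cos.measurable.comp measurable_log).aestronglyMeasurable
    (ae_of_all _ fun u => by simpa only [norm_eq_abs] using abs_cos_le_one (log u))

lemma integral_cos_log_div {a b : ℝ} (ha : 0 < a) (hb : 0 < b) :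
    ∫ x in a..b, cos (log x) / x = sin (log b) - sin (log a) := by
  have hpos : ∀ x ∈ uIcc a b, x ≠ 0 := fun x hx => ((lt_min ha hb).trans_le hx.1).ne'
  refine intervalIntegral.integral_eq_sub_of_hasDerivAt (f := fun x => sin (log x))
    (fun x hx => ?_) ?_
  · simpa only [div_eq_mul_inv, Function.comp_def] using
      ((hasDerivAt_sin (log x)).comp x (hasDerivAt_log (hpos x hx)))
  · exact (ContinuousOn.div (continuous_cos.comp_continuousOn (continuousOn_log.mono
      fun x hx => hpos x hx)) continuousOn_id hpos).intervalIntegrable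

lemma integral_cos_log {a b : ℝ} (ha : 0 < a) (hb : 0 < b) :
    ∫ x in a..b, cos (log x) =
      (b * (cos (log b) + sin (log b)) - a * (cos (log a) + sin (log a))) / 2 := by
  have hpos : ∀ x ∈ uIcc a b, x ≠ 0 := fun x hx => ((lt_min ha hb).trans_le hx.1).ne'
  have hderiv : ∀ x ∈ uIcc a b,
      HasDerivAt (fun x => x * (cos (log x) + sin (log x)) / 2) (cos (log x)) x := by
    intro x hx
    have hlog := hasDerivAt_log (hpos x hx)
    refine (((hasDerivAt_id x).mul (((hasDerivAt_cos (log x)).comp x hlog).add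
      ((hasDerivAt_sin (log x)).comp x hlog))).div_const 2).congr_deriv ?_
    simp only [id, Pi.add_apply, Function.comp_apply]
    field_simp [hpos x hx]
    ring
  rw [intervalIntegral.integral_eq_sub_of_hasDerivAt hderiv (continuous_cos.comp_continuousOn
    (continuousOn_log.mono fun x hx => hpos x hx)).intervalIntegrable]
  ring

lemma tendsto_log_mean_cos_log :
    Tendsto (fun t : ℝ => (log t)⁻¹ * ∫ u in Ioc (1:ℝ) t, cos (log u) / u) atTop (𝓝 0) := by
  have hmean : ∀ᶠ t in atTop, (log t)⁻¹ * sin (log t) =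
      (log t)⁻¹ * ∫ u in Ioc (1:ℝ) t, cos (log u) / u := by
    filter_upwards [eventually_ge_atTop 1] with t ht
    rw [← intervalIntegral.integral_of_le ht, integral_cos_log_div one_pos (by linarith),
      log_one, sin_zero, sub_zero]
  refine (tendsto_log_atTop.inv_tendsto_atTop.zero_mul_isBoundedUnder_le ?_).congr' hmean
  exact isBoundedUnder_of
    ⟨1, fun t => by simpa only [Function.comp, norm_eq_abs] using abs_sin_le_one _⟩

lemma cesaro_mean_cos_log_exp {x : ℝ} (hx : 0 ≤ x) :
    (exp x)⁻¹ * ∫ u in Ioc (1:ℝ) (exp x), cos (log u) = (cos x + sin x) / 2 - (exp x)⁻¹ / 2 := by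
  rw [← intervalIntegral.integral_of_le (one_le_exp hx), integral_cos_log one_pos (exp_pos x),
    log_exp, log_one, cos_zero, sin_zero]
  field_simp
  ring

lemma not_tendsto_cesaro_mean_cos_log (A : ℝ) :
    ¬ Tendsto (fun t : ℝ => t⁻¹ * ∫ u in Ioc (1:ℝ) t, cos (log u)) atTop (𝓝 A) := by
  intro hA
  have hlim : Tendsto (fun x => (cos x + sin x) / 2) atTop (𝓝 A) := by
    have h := (hA.comp tendsto_exp_atTop).add
      (tendsto_exp_atTop.inv_tendsto_atTop.div_const 2)
    rw [zero_div, add_zero] at h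
    refine h.congr' ?_
    filter_upwards [eventually_ge_atTop 0] with x hx
    simp only [Function.comp, Pi.inv_apply, cesaro_mean_cos_log_exp hx, sub_add_cancel]
  have hper : Function.Periodic (fun x => (cos x + sin x) / 2) (2 * π) := fun x => by
    simp only [cos_add_two_pi, sin_add_two_pi]
  have h0 := hper.eq_of_tendsto_atTop two_pi_pos hlim 0
  have hπ := hper.eq_of_tendsto_atTop two_pi_pos hlim π
  simp only [cos_zero, sin_zero, cos_pi, sin_pi] at h0 hπ
  linarith

theorem logarithmic_not_cesaro :
    ∃ s : ℝ → ℝ, (∀ t : ℝ, IntegrableOn s (Icc 1 t)) ∧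
      Tendsto (fun t : ℝ => (Real.log t)⁻¹ * ∫ u in Ioc (1:ℝ) t, s u / u)
        atTop (nhds 0) ∧
      ¬ ∃ A : ℝ, Tendsto (fun t : ℝ => t⁻¹ * ∫ u in Ioc (1:ℝ) t, s u)
        atTop (nhds A) :=
  ⟨fun u => cos (log u), fun _ => integrableOn_cos_log measure_Icc_lt_top.ne,
    tendsto_log_mean_cos_log, fun ⟨A, hA⟩ => not_tendsto_cesaro_mean_cos_log A hA⟩
end

section
/- For a sequence (s_k) of complex numbers, any real λ > 1, and any n with ⌊n^λ⌋ > n, the logarithmic means τ_n := (1/ℓ_n) Σ_{k=1}^n s_k/k satisfy s_n − τ_n = (ℓ_{⌊n^λ⌋}/(ℓ_{⌊n^λ⌋} − ℓ_n)) (τ_{⌊n^λ⌋} − τ_n) − (1/(ℓ_{⌊n^λ⌋} − ℓ_n)) Σ_{k=n+1}^{⌊n^λ⌋} (s_k − s_n)/k. -/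
/-!
Put `L := ℓ_m - ℓ_n` with `m = ⌊n^λ⌋`. Since `ℓ_m τ_m - ℓ_n τ_n = Σ_{n<k≤m} s_k/k` and
`Σ_{n<k≤m} (s_k - s_n)/k = Σ_{n<k≤m} s_k/k - s_n L`, the right-hand side equals
`(ℓ_m τ_m - ℓ_m τ_n - ℓ_m τ_m + ℓ_n τ_n + s_n L) / L = s_n - τ_n`.
-/

open Finset

theorem Finset.sum_Icc_one_add_sum_Ioc {M : Type*} [AddCommMonoid M] (f : ℕ → M) {n m : ℕ}
    (hnm : n ≤ m) : ∑ k ∈ Icc 1 n, f k + ∑ k ∈ Ioc n m, f k = ∑ k ∈ Icc 1 m, f k := by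
  have hIcc : ∀ j, Icc 1 j = Ioc 0 j := Icc_add_one_left_eq_Ioc 0
  rw [hIcc, hIcc]
  exact sum_Ioc_consecutive f (Nat.zero_le n) hnm

/-- `hM` is multiplicative so that it also covers `j = 0`, where `W 0 = 0` and `M 0` is junk. -/
theorem self_sub_weightedMean_eq {K : Type*} [Field K] (w x W M : ℕ → K)
    (hW : ∀ j, W j = ∑ k ∈ Icc 1 j, w k) (hM : ∀ j, M j * W j = ∑ k ∈ Icc 1 j, x k * w k)
    {n m : ℕ} (hnm : n ≤ m) (hWnm : W m - W n ≠ 0) :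
    x n - M n = W m / (W m - W n) * (M m - M n)
      - (W m - W n)⁻¹ * ∑ k ∈ Ioc n m, (x k - x n) * w k := by
  have hWsplit : W n + ∑ k ∈ Ioc n m, w k = W m := by
    rw [hW, hW, sum_Icc_one_add_sum_Ioc w hnm]
  have hMsplit : M n * W n + ∑ k ∈ Ioc n m, x k * w k = M m * W m := by
    rw [hM, hM, sum_Icc_one_add_sum_Ioc _ hnm]
  have htail : ∑ k ∈ Ioc n m, (x k - x n) * w k
      = ∑ k ∈ Ioc n m, x k * w k - x n * ∑ k ∈ Ioc n m, w k := by
    simp only [sub_mul, sum_sub_distrib, mul_sum]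
  rw [htail, div_mul_eq_mul_div, inv_mul_eq_div, div_sub_div_same, eq_div_iff hWnm]
  linear_combination hMsplit - x n * hWsplit

theorem logMean_mul_harmonicSum (s τ : ℕ → ℂ) (ℓ : ℕ → ℝ)
    (hℓ : ∀ n, ℓ n = ∑ k ∈ Icc 1 n, (1:ℝ) / k)
    (hτ : ∀ n, τ n = ((ℓ n : ℂ))⁻¹ * ∑ k ∈ Icc 1 n, s k / (k : ℂ)) (j : ℕ) :
    τ j * ℓ j = ∑ k ∈ Icc 1 j, s k * (k : ℂ)⁻¹ := by
  rcases Nat.eq_zero_or_pos j with rfl | hj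
  · simp [hℓ]
  have hℓj : 0 < ℓ j := by
    rw [hℓ]
    refine sum_pos (fun k hk => ?_) (nonempty_Icc.mpr hj)
    have : 0 < k := (mem_Icc.mp hk).1
    positivity
  rw [hτ, mul_comm, ← mul_assoc, mul_inv_cancel₀ (by exact_mod_cast hℓj.ne'), one_mul]
  simp only [div_eq_mul_inv]

theorem lemma2_part_i_general
    (s : ℕ → ℂ)
    (ℓ : ℕ → ℝ) (hℓ : ∀ n, ℓ n = ∑ k ∈ Finset.Icc 1 n, (1:ℝ) / k)
    (τ : ℕ → ℂ) (hτ : ∀ n, τ n = ((ℓ n : ℂ))⁻¹ * ∑ k ∈ Finset.Icc 1 n, s k / (k : ℂ))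
    (l : ℝ) (n : ℕ) (hn : n < ⌊(n:ℝ) ^ l⌋₊) :
    s n - τ n =
      ((ℓ ⌊(n:ℝ) ^ l⌋₊ / (ℓ ⌊(n:ℝ) ^ l⌋₊ - ℓ n) : ℝ) : ℂ) * (τ ⌊(n:ℝ) ^ l⌋₊ - τ n)
      - (((ℓ ⌊(n:ℝ) ^ l⌋₊ - ℓ n : ℝ)) : ℂ)⁻¹ *
          ∑ k ∈ Finset.Icc (n + 1) ⌊(n:ℝ) ^ l⌋₊, (s k - s n) / (k : ℂ) := by
  set m := ⌊(n:ℝ) ^ l⌋₊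
  have hgap : 0 < ℓ m - ℓ n := by
    rw [hℓ, hℓ, ← sum_Icc_one_add_sum_Ioc _ hn.le, add_sub_cancel_left]
    refine sum_pos (fun k hk => ?_) (nonempty_Ioc.mpr hn)
    have : 0 < k := Nat.zero_lt_of_lt (mem_Ioc.mp hk).1
    positivity
  have hidentity := self_sub_weightedMean_eq (fun k => (k : ℂ)⁻¹) s (fun j => (ℓ j : ℂ)) τ
    (fun j => by simp [hℓ]) (logMean_mul_harmonicSum s τ ℓ hℓ hτ) hn.le
    (by exact_mod_cast hgap.ne')
  rw [hidentity, Icc_add_one_left_eq_Ioc]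
  push_cast
  simp only [div_eq_mul_inv]

theorem lemma2_part_i
    (s : ℕ → ℂ)
    (ℓ : ℕ → ℝ) (hℓ : ∀ n, ℓ n = ∑ k ∈ Finset.Icc 1 n, (1:ℝ) / k)
    (τ : ℕ → ℂ) (hτ : ∀ n, τ n = ((ℓ n : ℂ))⁻¹ * ∑ k ∈ Finset.Icc 1 n, s k / (k : ℂ))
    (l : ℝ) (hl : 1 < l) (n : ℕ) (hn : n < ⌊(n:ℝ) ^ l⌋₊) :
    s n - τ n =
      ((ℓ ⌊(n:ℝ) ^ l⌋₊ / (ℓ ⌊(n:ℝ) ^ l⌋₊ - ℓ n) : ℝ) : ℂ) * (τ ⌊(n:ℝ) ^ l⌋₊ - τ n)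
      - (((ℓ ⌊(n:ℝ) ^ l⌋₊ - ℓ n : ℝ)) : ℂ)⁻¹ *
          ∑ k ∈ Finset.Icc (n + 1) ⌊(n:ℝ) ^ l⌋₊, (s k - s n) / (k : ℂ) :=
  lemma2_part_i_general s ℓ hℓ τ hτ l n hn
end

section
/- Let (s_k) be a real sequence that is slowly decreasing with respect to (L,1) summability: for every ε > 0 there exist n₀ ∈ ℕ and λ > 1 such that s_k − s_n ≥ −ε whenever n₀ ≤ n < k ≤ n^λ. If (1/ℓ_n) Σ_{k=1}^n s_k/k → A as n → ∞, where ℓ_n := Σ_{k=1}^n 1/k, then s_n → A. -/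
/-!
Write `S n = ∑_{k ≤ n} s k / k`, so that `S n = (A + o(1)) H n` with `H` the harmonic
numbers. Since `H n = log n + O(1)`, the blocks `(n, ⌊n ^ λ⌋]` and `(⌈n ^ (1/λ)⌉, n]` carry a
logarithmic weight comparable to `H n`, so the weighted means `(S m - S n) / (H m - H n)` over
them still tend to `A`. Slow decrease bounds `s` from below by `s n - ε` on the first block and
from above by `s n + ε` on the second, whence `limsup s ≤ A + ε` and `liminf s ≥ A - ε`.
-/

open Filter Topology Finset Real

section WeightedMean

variable {ι K : Type*} [Field K] [LinearOrder K] [IsStrictOrderedRing K]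
  {t : Finset ι} {f g : ι → K} {c : K}

lemma Finset.le_sum_div_sum_of_mul_le (ht : t.Nonempty) (hg : ∀ i ∈ t, 0 < g i)
    (hfg : ∀ i ∈ t, c * g i ≤ f i) : c ≤ (∑ i ∈ t, f i) / ∑ i ∈ t, g i := by
  rw [le_div_iff₀ (sum_pos hg ht), mul_sum]
  exact sum_le_sum hfg

lemma Finset.sum_div_sum_le_of_le_mul (ht : t.Nonempty) (hg : ∀ i ∈ t, 0 < g i)
    (hfg : ∀ i ∈ t, f i ≤ c * g i) : (∑ i ∈ t, f i) / ∑ i ∈ t, g i ≤ c := by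
  rw [div_le_iff₀ (sum_pos hg ht), mul_sum]
  exact sum_le_sum hfg

end WeightedMean

lemma Finset.sum_Icc_one_sub_sum_Icc_one {M : Type*} [AddCommGroup M] (f : ℕ → M) {n m : ℕ}
    (h : n ≤ m) : ∑ k ∈ Icc 1 m, f k - ∑ k ∈ Icc 1 n, f k = ∑ k ∈ Ioc n m, f k := by
  rw [← zero_add 1, Icc_add_one_left_eq_Ioc, Icc_add_one_left_eq_Ioc,
    ← sum_Ioc_consecutive f n.zero_le h, add_sub_cancel_left]

lemma abs_sub_div_sub_sub_le {a₁ a₂ b₁ b₂ A r : ℝ} (hr : 1 < r) (hb₁ : 0 < b₁)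
    (h : r * b₁ ≤ b₂) :
    |(a₂ - a₁) / (b₂ - b₁) - A|
      ≤ r / (r - 1) * |b₂⁻¹ * a₂ - A| + (r - 1)⁻¹ * |b₁⁻¹ * a₁ - A| := by
  have hb₂ : 0 < b₂ := by nlinarith
  have hd : 0 < b₂ - b₁ := by nlinarith
  set e₁ := b₁⁻¹ * a₁ - A
  set e₂ := b₂⁻¹ * a₂ - A
  have ha₁ : a₁ = b₁ * (A + e₁) := by simp only [e₁]; field_simp; ring
  have ha₂ : a₂ = b₂ * (A + e₂) := by simp only [e₂]; field_simp; ring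
  have hsplit : (a₂ - a₁) / (b₂ - b₁) - A
      = b₂ / (b₂ - b₁) * e₂ - b₁ / (b₂ - b₁) * e₁ := by
    rw [ha₁, ha₂]; field_simp; ring
  have hw₂ : b₂ / (b₂ - b₁) ≤ r / (r - 1) := by
    rw [div_le_div_iff₀ hd (by linarith)]; nlinarith
  have hw₁ : b₁ / (b₂ - b₁) ≤ (r - 1)⁻¹ := by
    rw [← one_div, div_le_div_iff₀ hd (by linarith)]; nlinarith
  rw [hsplit]
  calc |b₂ / (b₂ - b₁) * e₂ - b₁ / (b₂ - b₁) * e₁|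
      ≤ b₂ / (b₂ - b₁) * |e₂| + b₁ / (b₂ - b₁) * |e₁| := by
        refine (abs_sub _ _).trans ?_
        rw [abs_mul, abs_mul, abs_of_pos (div_pos hb₂ hd), abs_of_pos (div_pos hb₁ hd)]
    _ ≤ r / (r - 1) * |e₂| + (r - 1)⁻¹ * |e₁| := by gcongr

lemma Filter.Tendsto.sub_div_sub_of_mul_le {α : Type*} {l : Filter α} {a b : ℕ → ℝ}
    {A r : ℝ} {u v : α → ℕ} (hab : Tendsto (fun j => (b j)⁻¹ * a j) atTop (𝓝 A))
    (hb : ∀ᶠ j in atTop, 0 < b j) (hu : Tendsto u l atTop) (hv : Tendsto v l atTop) (hr : 1 < r)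
    (huv : ∀ᶠ i in l, r * b (u i) ≤ b (v i)) :
    Tendsto (fun i => (a (v i) - a (u i)) / (b (v i) - b (u i))) l (𝓝 A) := by
  set e : ℕ → ℝ := fun j => |(b j)⁻¹ * a j - A|
  have he : Tendsto e atTop (𝓝 0) := by simpa using (hab.sub_const A).abs
  have hbound : Tendsto (fun i => r / (r - 1) * e (v i) + (r - 1)⁻¹ * e (u i)) l (𝓝 0) := by
    simpa using ((he.comp hv).const_mul (r / (r - 1))).add ((he.comp hu).const_mul (r - 1)⁻¹)
  rw [tendsto_iff_norm_sub_tendsto_zero]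
  refine squeeze_zero' (.of_forall fun _ => norm_nonneg _) ?_ hbound
  filter_upwards [hu.eventually hb, huv] with i hbu hi
  rw [Real.norm_eq_abs]
  exact abs_sub_div_sub_sub_le hr hbu hi

lemma harmonic_eq_sum_Icc_one_div (n : ℕ) :
    (harmonic n : ℝ) = ∑ k ∈ Icc 1 n, (1 : ℝ) / k := by
  simp [harmonic_eq_sum_Icc]

lemma harmonic_monotone : Monotone harmonic :=
  monotone_nat_of_le_succ fun n => by
    rw [harmonic_succ]; exact le_add_of_nonneg_right (by positivity)

lemma lt_of_mul_harmonic_le {n m : ℕ} {r : ℝ} (hr : 1 < r) (hn : n ≠ 0)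
    (h : r * harmonic n ≤ harmonic m) : n < m := by
  by_contra! hmn
  have hpos : (0 : ℝ) < harmonic n := by exact_mod_cast harmonic_pos hn
  have hle : (harmonic m : ℝ) ≤ harmonic n := by exact_mod_cast harmonic_monotone hmn
  nlinarith

lemma eventually_mul_harmonic_le_harmonic {α : Type*} {l : Filter α} {u v : α → ℕ}
    {q r c : ℝ} (hr : 0 ≤ r) (hrq : r < q) (hu : Tendsto u l atTop)
    (huv : ∀ᶠ i in l, q * log (u i) - c ≤ log (v i)) :
    ∀ᶠ i in l, r * harmonic (u i) ≤ harmonic (v i) := by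
  have hlog : Tendsto (fun i => log (u i)) l atTop :=
    tendsto_log_atTop.comp (tendsto_natCast_atTop_atTop.comp hu)
  filter_upwards [huv, hlog.eventually_ge_atTop ((r + c) / (q - r))] with i hi hlarge
  rw [div_le_iff₀ (sub_pos.2 hrq)] at hlarge
  calc r * harmonic (u i) ≤ r * (1 + log (u i)) := by gcongr; exact harmonic_le_one_add_log _
    _ ≤ q * log (u i) - c := by linarith
    _ ≤ log (v i) := hi
    _ ≤ harmonic (v i) := by simpa using log_le_harmonic_floor (v i : ℝ) (Nat.cast_nonneg _)

lemma mul_log_sub_log_two_le_log_floor_rpow {x p : ℝ} (hx : 1 ≤ x) (hp : 0 ≤ p) :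
    p * log x - log 2 ≤ log ⌊x ^ p⌋₊ := by
  have hxp : 1 ≤ x ^ p := one_le_rpow hx hp
  calc p * log x - log 2 = log (x ^ p / 2) := by
        rw [log_div (by positivity) two_ne_zero, log_rpow (by positivity)]
    _ ≤ log ⌊x ^ p⌋₊ := log_le_log (by positivity) (Nat.div_two_lt_floor hxp).le

lemma log_ceil_rpow_le_log_two_add_mul_log {x p : ℝ} (hx : 1 ≤ x) (hp : 0 ≤ p) :
    log ⌈x ^ p⌉₊ ≤ log 2 + p * log x := by
  have hxp : 1 ≤ x ^ p := one_le_rpow hx hp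
  calc log ⌈x ^ p⌉₊ ≤ log (2 * x ^ p) :=
        log_le_log (by exact_mod_cast Nat.ceil_pos.2 (by positivity))
          (Nat.ceil_le_two_mul (by linarith))
    _ = log 2 + p * log x := by
        rw [log_mul two_ne_zero (by positivity), log_rpow (by positivity)]

noncomputable def logBlockMean (s : ℕ → ℝ) (n m : ℕ) : ℝ :=
  (∑ k ∈ Ioc n m, s k / k) / ∑ k ∈ Ioc n m, (1 : ℝ) / k

section LogBlockMean

variable {s : ℕ → ℝ} {n m : ℕ}

lemma logBlockMean_eq (h : n ≤ m) :
    logBlockMean s n m = (∑ k ∈ Icc 1 m, s k / k - ∑ k ∈ Icc 1 n, s k / k) /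
      (harmonic m - harmonic n : ℝ) := by
  rw [logBlockMean, harmonic_eq_sum_Icc_one_div, harmonic_eq_sum_Icc_one_div,
    sum_Icc_one_sub_sum_Icc_one _ h, sum_Icc_one_sub_sum_Icc_one _ h]

lemma one_div_pos_of_mem_Ioc {k : ℕ} (hk : k ∈ Ioc n m) : (0 : ℝ) < 1 / k := by
  have : 0 < k := n.zero_le.trans_lt (mem_Ioc.1 hk).1
  positivity

lemma le_logBlockMean {c : ℝ} (h : n < m) (hs : ∀ k ∈ Ioc n m, c ≤ s k) :
    c ≤ logBlockMean s n m :=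
  le_sum_div_sum_of_mul_le (nonempty_Ioc.2 h) (fun _ hk => one_div_pos_of_mem_Ioc hk)
    fun k hk => by rw [mul_one_div]; gcongr; exact hs k hk

lemma logBlockMean_le {c : ℝ} (h : n < m) (hs : ∀ k ∈ Ioc n m, s k ≤ c) :
    logBlockMean s n m ≤ c :=
  sum_div_sum_le_of_le_mul (nonempty_Ioc.2 h) (fun _ hk => one_div_pos_of_mem_Ioc hk)
    fun k hk => by rw [mul_one_div]; gcongr; exact hs k hk

end LogBlockMean

lemma tendsto_logBlockMean {α : Type*} {l : Filter α} {s : ℕ → ℝ} {A r : ℝ} {u v : α → ℕ}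
    (hs : Tendsto (fun n => (harmonic n : ℝ)⁻¹ * ∑ k ∈ Icc 1 n, s k / k) atTop (𝓝 A))
    (hu : Tendsto u l atTop) (hv : Tendsto v l atTop) (hr : 1 < r)
    (huv : ∀ᶠ i in l, r * harmonic (u i) ≤ harmonic (v i)) :
    Tendsto (fun i => logBlockMean s (u i) (v i)) l (𝓝 A) := by
  have hpos : ∀ᶠ n in atTop, (0 : ℝ) < harmonic n :=
    (eventually_ne_atTop 0).mono fun n hn => by exact_mod_cast harmonic_pos hn
  refine (hs.sub_div_sub_of_mul_le hpos hu hv hr huv).congr' ?_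
  filter_upwards [huv, hu.eventually_ne_atTop 0] with i hi hu0
  rw [logBlockMean_eq (lt_of_mul_harmonic_le hr hu0 hi).le]

section SlowDecrease

variable {s : ℕ → ℝ} {A ε l a : ℝ} {n₀ : ℕ}

lemma eventually_lt_of_slowDecrease
    (hs : Tendsto (fun n => (harmonic n : ℝ)⁻¹ * ∑ k ∈ Icc 1 n, s k / k) atTop (𝓝 A))
    (hl : 1 < l) (hsd : ∀ n k : ℕ, n₀ ≤ n → n < k → (k : ℝ) ≤ (n : ℝ) ^ l → s k - s n ≥ -ε)
    (ha : A + ε < a) : ∀ᶠ n in atTop, s n < a := by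
  set v : ℕ → ℕ := fun n => ⌊(n : ℝ) ^ l⌋₊
  have hv : Tendsto v atTop atTop := tendsto_nat_floor_atTop.comp
    ((tendsto_rpow_atTop (by linarith)).comp tendsto_natCast_atTop_atTop)
  have hlog : ∀ᶠ n : ℕ in atTop, l * log n - log 2 ≤ log (v n) :=
    (eventually_ge_atTop 1).mono fun n hn =>
      mul_log_sub_log_two_le_log_floor_rpow (by exact_mod_cast hn) (by linarith)
  have hratio : ∀ᶠ n in atTop, (1 + l) / 2 * harmonic n ≤ harmonic (v n) :=
    eventually_mul_harmonic_le_harmonic (by linarith) (by linarith) tendsto_id hlog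
  have hmean : Tendsto (fun n => logBlockMean s n (v n)) atTop (𝓝 A) :=
    tendsto_logBlockMean hs tendsto_id hv (by linarith) hratio
  filter_upwards [hmean.eventually (gt_mem_nhds (show A < a - ε by linarith)), hratio,
    eventually_ge_atTop n₀, eventually_ne_atTop 0] with n hmean_lt hn hn₀ hn0
  have hle : s n - ε ≤ logBlockMean s n (v n) :=
    le_logBlockMean (lt_of_mul_harmonic_le (by linarith) hn0 hn) fun k hk => by
      have hkv : (k : ℝ) ≤ (n : ℝ) ^ l :=
        (Nat.cast_le.2 (mem_Ioc.1 hk).2).trans (Nat.floor_le (by positivity))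
      linarith [hsd n k hn₀ (mem_Ioc.1 hk).1 hkv]
  linarith

lemma eventually_gt_of_slowDecrease
    (hs : Tendsto (fun n => (harmonic n : ℝ)⁻¹ * ∑ k ∈ Icc 1 n, s k / k) atTop (𝓝 A))
    (hl : 1 < l) (hsd : ∀ n k : ℕ, n₀ ≤ n → n < k → (k : ℝ) ≤ (n : ℝ) ^ l → s k - s n ≥ -ε)
    (hε : 0 ≤ ε) (ha : a < A - ε) : ∀ᶠ n in atTop, a < s n := by
  set u : ℕ → ℕ := fun n => ⌈(n : ℝ) ^ l⁻¹⌉₊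
  have hu : Tendsto u atTop atTop := tendsto_nat_ceil_atTop.comp
    ((tendsto_rpow_atTop (by positivity)).comp tendsto_natCast_atTop_atTop)
  have hlog : ∀ᶠ n : ℕ in atTop, l * log (u n) - l * log 2 ≤ log n := by
    filter_upwards [eventually_ge_atTop 1] with n hn
    have hl0 : 0 ≤ l := by linarith
    have h := mul_le_mul_of_nonneg_left (log_ceil_rpow_le_log_two_add_mul_log
      (x := n) (by exact_mod_cast hn) (inv_nonneg.2 hl0)) hl0
    rwa [mul_add, ← mul_assoc, mul_inv_cancel₀ (by positivity), one_mul,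
      ← sub_le_iff_le_add'] at h
  have hratio : ∀ᶠ n in atTop, (1 + l) / 2 * harmonic (u n) ≤ harmonic n :=
    eventually_mul_harmonic_le_harmonic (by linarith) (by linarith) hu hlog
  have hmean : Tendsto (fun n => logBlockMean s (u n) n) atTop (𝓝 A) :=
    tendsto_logBlockMean hs hu tendsto_id (by linarith) hratio
  filter_upwards [hmean.eventually (lt_mem_nhds (show a + ε < A by linarith)), hratio,
    hu.eventually_ge_atTop n₀, hu.eventually_ne_atTop 0] with n hmean_gt hn hn₀ hu0
  have hle : logBlockMean s (u n) n ≤ s n + ε :=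
    logBlockMean_le (lt_of_mul_harmonic_le (by linarith) hu0 hn) fun k hk => by
      obtain ⟨huk, hkn⟩ := mem_Ioc.1 hk
      rcases hkn.eq_or_lt with rfl | hkn
      · linarith
      have hnk : (n : ℝ) ≤ (k : ℝ) ^ l :=
        calc (n : ℝ) = ((n : ℝ) ^ l⁻¹) ^ l := by
              rw [← rpow_mul (by positivity), inv_mul_cancel₀ (by positivity), rpow_one]
          _ ≤ (k : ℝ) ^ l := by
              gcongr
              exact (Nat.le_ceil _).trans (by exact_mod_cast huk.le)
      linarith [hsd k n (hn₀.trans huk.le) hkn hnk]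
  linarith

end SlowDecrease

theorem corollary3
    (s : ℕ → ℝ) (A : ℝ)
    (hsd : ∀ ε > (0:ℝ), ∃ n₀ : ℕ, ∃ l > (1:ℝ),
      ∀ n k : ℕ, n₀ ≤ n → n < k → (k : ℝ) ≤ (n : ℝ) ^ l → s k - s n ≥ -ε)
    (hL1 : Tendsto (fun n : ℕ =>
        (∑ k ∈ Finset.Icc 1 n, (1:ℝ) / k)⁻¹ * ∑ k ∈ Finset.Icc 1 n, s k / k)
      atTop (nhds A)) :
    Tendsto s atTop (nhds A) := by
  have hs : Tendsto (fun n => (harmonic n : ℝ)⁻¹ * ∑ k ∈ Icc 1 n, s k / k) atTop (𝓝 A) := by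
    simpa only [harmonic_eq_sum_Icc_one_div] using hL1
  refine tendsto_order.2 ⟨fun a ha => ?_, fun a ha => ?_⟩
  · obtain ⟨n₀, l, hl, hsd⟩ := hsd ((A - a) / 2) (by linarith)
    exact eventually_gt_of_slowDecrease hs hl hsd (by linarith) (by linarith)
  · obtain ⟨n₀, l, hl, hsd⟩ := hsd ((a - A) / 2) (by linarith)
    exact eventually_lt_of_slowDecrease hs hl hsd (by linarith)
end

section
/- If a sequence (s_k) of complex numbers satisfies (1/n) Σ_{k=1}^n s_k → A as n → ∞, then it is also summable (L,1) to A: (1/ℓ_n) Σ_{k=1}^n s_k/k → A, where ℓ_n := Σ_{k=1}^n 1/k. -/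
/-!
Summation by parts gives `∑_{k ≤ n} s_k / k = S_n / (n + 1) + ∑_{k ≤ n} σ_k / (k + 1)`, where `S_n`
is the partial sum and `σ_n = S_n / n` the Cesàro mean. After replacing `s_k` by `s_k - A` we have
`σ_k → 0`, so the last sum is `o(∑_{k ≤ n} 1/k) = o(ℓ_n)` and the boundary term is bounded, while
`ℓ_n → ∞`.
-/

open Filter Finset Asymptotics Topology

theorem Finset.sum_Icc_one_eq_sum_range {M : Type*} [AddCommMonoid M] (f : ℕ → M) (n : ℕ) :
    ∑ k ∈ Icc 1 n, f k = ∑ i ∈ range n, f (i + 1) := by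
  rw [← Ico_add_one_right_eq_Icc, sum_Ico_eq_sum_range]
  simp [add_comm]

theorem Asymptotics.IsLittleO.sum_Icc_one {E : Type*} [NormedAddCommGroup E] {f : ℕ → E}
    {g : ℕ → ℝ} (h : f =o[atTop] g) (hg : 0 ≤ g)
    (h'g : Tendsto (fun n => ∑ k ∈ Icc 1 n, g k) atTop atTop) :
    (fun n => ∑ k ∈ Icc 1 n, f k) =o[atTop] fun n => ∑ k ∈ Icc 1 n, g k := by
  simp only [sum_Icc_one_eq_sum_range] at h'g ⊢
  exact (h.comp_tendsto (tendsto_add_atTop_nat 1)).sum_range (fun i => hg (i + 1)) h'g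

theorem tendsto_sum_Icc_one_div_atTop :
    Tendsto (fun n : ℕ => ∑ k ∈ Icc 1 n, (1 : ℝ) / k) atTop atTop := by
  simpa only [sum_Icc_one_eq_sum_range, Nat.cast_add_one] using
    Real.tendsto_sum_range_one_div_nat_succ_atTop

theorem sum_Icc_div_eq_summation_by_parts {K : Type*} [Field K] [CharZero K] (s : ℕ → K) (n : ℕ) :
    ∑ k ∈ Icc 1 n, s k / k =
      (∑ k ∈ Icc 1 n, s k) / (n + 1) +
        ∑ k ∈ Icc 1 n, ((k : K)⁻¹ * ∑ j ∈ Icc 1 k, s j) / (k + 1) := by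
  induction n with
  | zero => simp
  | succ n ih =>
    simp only [sum_Icc_succ_top (Nat.le_add_left 1 n), ih, Nat.cast_add_one]
    have h₁ : (n : K) + 1 ≠ 0 := Nat.cast_add_one_ne_zero n
    have h₂ : (n : K) + 1 + 1 ≠ 0 := mod_cast (n + 1).succ_ne_zero
    field_simp
    ring

section RCLike

variable {𝕜 : Type*} [RCLike 𝕜]

theorem isLittleO_sum_Icc_div_of_cesaro_tendsto_zero {t : ℕ → 𝕜}
    (ht : Tendsto (fun n : ℕ => (n : 𝕜)⁻¹ * ∑ k ∈ Icc 1 n, t k) atTop (𝓝 0)) :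
    (fun n => ∑ k ∈ Icc 1 n, t k / k) =o[atTop] fun n => ∑ k ∈ Icc 1 n, (1 : ℝ) / k := by
  set τ : ℕ → 𝕜 := fun n => (n : 𝕜)⁻¹ * ∑ k ∈ Icc 1 n, t k with hτ_def
  have hτ : τ =o[atTop] fun _ => (1 : ℝ) := (isLittleO_one_iff ℝ).2 ht
  have hℓ := tendsto_sum_Icc_one_div_atTop
  have hnorm_succ (n : ℕ) : ‖(n : 𝕜) + 1‖ = n + 1 := mod_cast RCLike.norm_natCast (K := 𝕜) (n + 1)
  have hboundary : (fun n => (∑ k ∈ Icc 1 n, t k) / (n + 1 : 𝕜)) =O[atTop] τ := by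
    refine IsBigO.of_bound 1 ?_
    filter_upwards [eventually_ge_atTop 1] with n hn
    have hn' : (0 : ℝ) < n := by exact_mod_cast hn
    rw [hτ_def, norm_div, norm_mul, norm_inv, hnorm_succ, RCLike.norm_natCast, one_mul,
      inv_mul_eq_div]
    gcongr
    linarith
  have hweight : (fun k : ℕ => ((k : 𝕜) + 1)⁻¹) =O[atTop] fun k => (1 : ℝ) / k := by
    refine IsBigO.of_bound 1 ?_
    filter_upwards [eventually_ge_atTop 1] with k hk
    have hk' : (0 : ℝ) < k := by exact_mod_cast hk
    rw [norm_inv, hnorm_succ, Real.norm_of_nonneg (by positivity), one_mul, one_div]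
    gcongr
    linarith
  have hinterior : (fun k => τ k / (k + 1)) =o[atTop] fun k => (1 : ℝ) / k := by
    simpa only [div_eq_mul_inv, one_mul] using hτ.mul_isBigO hweight
  have hconst : (fun _ : ℕ => (1 : ℝ)) =o[atTop] fun n : ℕ => ∑ k ∈ Icc 1 n, (1 : ℝ) / k :=
    isLittleO_const_left.2 (Or.inr (tendsto_norm_atTop_atTop.comp hℓ))
  refine ((hboundary.trans_isLittleO (hτ.trans hconst)).add
    (hinterior.sum_Icc_one (fun k => by positivity) hℓ)).congr_left fun n => ?_
  exact (sum_Icc_div_eq_summation_by_parts t n).symm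

theorem tendsto_logMean_of_cesaro_tendsto {s : ℕ → 𝕜} {A : 𝕜}
    (h : Tendsto (fun n : ℕ => (n : 𝕜)⁻¹ * ∑ k ∈ Icc 1 n, s k) atTop (𝓝 A)) :
    Tendsto (fun n : ℕ => ((∑ k ∈ Icc 1 n, (1 : ℝ) / k : ℝ) : 𝕜)⁻¹ * ∑ k ∈ Icc 1 n, s k / k)
      atTop (𝓝 A) := by
  set ℓ : ℕ → ℝ := fun n => ∑ k ∈ Icc 1 n, (1 : ℝ) / k with hℓ_def
  have hcesaro : Tendsto (fun n : ℕ => (n : 𝕜)⁻¹ * ∑ k ∈ Icc 1 n, (s k - A)) atTop (𝓝 0) := by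
    refine (tendsto_sub_nhds_zero_iff.2 h).congr' ?_
    filter_upwards [eventually_ge_atTop 1] with n hn
    have hn' : (n : 𝕜) ≠ 0 := by exact_mod_cast (Nat.one_le_iff_ne_zero.1 hn)
    rw [sum_sub_distrib, sum_const, Nat.card_Icc, add_tsub_cancel_right, nsmul_eq_mul, mul_sub,
      inv_mul_cancel_left₀ hn']
  have hnorm (n : ℕ) : ‖((ℓ n : ℝ) : 𝕜)‖ = |ℓ n| := RCLike.norm_ofReal _
  have hcentered : Tendsto (fun n => ((ℓ n : ℝ) : 𝕜)⁻¹ * ∑ k ∈ Icc 1 n, (s k - A) / k)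
      atTop (𝓝 0) := by
    have ho : (fun n => ∑ k ∈ Icc 1 n, (s k - A) / k) =o[atTop] fun n => ‖((ℓ n : ℝ) : 𝕜)‖ := by
      simp only [hnorm]
      exact isLittleO_abs_right.2 (isLittleO_sum_Icc_div_of_cesaro_tendsto_zero hcesaro)
    simpa only [div_eq_inv_mul] using (isLittleO_norm_right.1 ho).tendsto_div_nhds_zero
  have hlim := hcentered.add_const A
  rw [zero_add] at hlim
  refine hlim.congr' ?_
  filter_upwards [eventually_ge_atTop 1] with n hn
  have hℓ_pos : 0 < ℓ n :=
    sum_pos (fun k hk => one_div_pos.2 (Nat.cast_pos.2 (mem_Icc.1 hk).1))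
      ⟨1, mem_Icc.2 ⟨le_rfl, hn⟩⟩
  have hsplit : ∑ k ∈ Icc 1 n, (s k - A) / k = ∑ k ∈ Icc 1 n, s k / k - A * ℓ n := by
    simp only [hℓ_def, RCLike.ofReal_sum, RCLike.ofReal_div, RCLike.ofReal_one,
      RCLike.ofReal_natCast, mul_sum, mul_one_div, sub_div, sum_sub_distrib]
  rw [hsplit, mul_sub, mul_left_comm, inv_mul_cancel₀ (RCLike.ofReal_ne_zero.2 hℓ_pos.ne'),
    mul_one, sub_add_cancel]

end RCLike

theorem cesaro_implies_logarithmic_seq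
    (s : ℕ → ℂ) (A : ℂ)
    (hC1 : Tendsto (fun n : ℕ => ((n : ℂ))⁻¹ * ∑ k ∈ Finset.Icc 1 n, s k)
      atTop (nhds A)) :
    Tendsto (fun n : ℕ =>
        (((∑ k ∈ Finset.Icc 1 n, (1:ℝ) / k) : ℝ) : ℂ)⁻¹ *
          ∑ k ∈ Finset.Icc 1 n, s k / (k : ℂ))
      atTop (nhds A) :=
  tendsto_logMean_of_cesaro_tendsto hC1
end
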